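/- arXiv:1201.6072 — 2 statements merged into one kernel-verified Lean document; each statement's English description precedes it below -/
import Mathlib

section
/- Let g : ℝ → ℝ be continuously differentiable, monotone increasing with g(0) = 0, and suppose there exist 0 < m ≤ M and γ ∈ (0,1) such that m ≤ g′(s) ≤ M(1 + s·g(s))^γ for all s ∈ ℝ. Then there exists a constant C > 0 such that for all s₁ ≠ s₂, (g(s₂) − g(s₁))/(s₂ − s₁) ≤ C·[1 + g(s₁)s₁ + g(s₂)s₂]^γ. -/
/-- For a `C¹` monotone increasing damping `g` with `g(0) = 0` satisfying
`m ≤ g′(s) ≤ M(1 + s·g(s))^γ` with `0 < m ≤ M` and `γ ∈ (0,1)`, there is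
`C > 0` with `(g(s₂) − g(s₁))/(s₂ − s₁) ≤ C·[1 + g(s₁)s₁ + g(s₂)s₂]^γ`
for all `s₁ ≠ s₂`. -/
theorem stmt_4 (g : ℝ → ℝ) (m M γ : ℝ)
    (hg : ContDiff ℝ 1 g) (hmono : Monotone g) (hg0 : g 0 = 0)
    (hm : 0 < m) (hmM : m ≤ M) (hγ0 : 0 < γ) (hγ1 : γ < 1)
    (hderiv : ∀ s : ℝ, m ≤ deriv g s ∧ deriv g s ≤ M * (1 + s * g s) ^ γ) :
    ∃ C : ℝ, 0 < C ∧ ∀ s₁ s₂ : ℝ, s₁ ≠ s₂ →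
      (g s₂ - g s₁) / (s₂ - s₁) ≤ C * (1 + g s₁ * s₁ + g s₂ * s₂) ^ γ := by
  have hM : 0 < M := hm.trans_le hmM
  have hsg : ∀ s : ℝ, 0 ≤ s * g s := by
    intro s
    rcases le_or_gt 0 s with h | h
    · exact mul_nonneg h (by simpa [hg0] using hmono h)
    · have : g s ≤ 0 := by simpa [hg0] using hmono h.le
      nlinarith
  have hdiff : Differentiable ℝ g := hg.differentiable one_ne_zero
  have key : ∀ s₁ s₂ : ℝ, s₁ < s₂ →
      (g s₂ - g s₁) / (s₂ - s₁) ≤ M * (1 + g s₁ * s₁ + g s₂ * s₂) ^ γ := by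
    intro s₁ s₂ hlt
    obtain ⟨c, hc, hceq⟩ := exists_deriv_eq_slope g hlt hdiff.continuous.continuousOn
      hdiff.differentiableOn
    have hcg : c * g c ≤ g s₁ * s₁ + g s₂ * s₂ := by
      rcases le_or_gt 0 c with h | h
      · have h1 : g c ≤ g s₂ := hmono hc.2.le
        have h2 : 0 ≤ g c := by simpa [hg0] using hmono h
        nlinarith [hsg s₁, mul_le_mul hc.2.le h1 h2 (h.trans hc.2.le)]
      · have h1 : g s₁ ≤ g c := hmono hc.1.le
        have h2 : g c ≤ 0 := by simpa [hg0] using hmono h.le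
        nlinarith [hsg s₂, hc.1]
    have hbase : (1 + c * g c) ^ γ ≤ (1 + g s₁ * s₁ + g s₂ * s₂) ^ γ :=
      Real.rpow_le_rpow (by linarith [hsg c]) (by linarith) hγ0.le
    calc (g s₂ - g s₁) / (s₂ - s₁) = deriv g c := hceq.symm
      _ ≤ M * (1 + c * g c) ^ γ := (hderiv c).2
      _ ≤ M * (1 + g s₁ * s₁ + g s₂ * s₂) ^ γ := by
          exact mul_le_mul_of_nonneg_left hbase hM.le
  refine ⟨M, hM, fun s₁ s₂ hne => ?_⟩
  rcases hne.lt_or_gt with h | h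
  · exact key s₁ s₂ h
  · have := key s₂ s₁ h
    have heq : (g s₂ - g s₁) / (s₂ - s₁) = (g s₁ - g s₂) / (s₁ - s₂) := by
      rw [← neg_div_neg_eq]; ring_nf
    rw [heq]
    calc (g s₁ - g s₂) / (s₁ - s₂) ≤ M * (1 + g s₂ * s₂ + g s₁ * s₁) ^ γ := this
      _ = M * (1 + g s₁ * s₁ + g s₂ * s₂) ^ γ := by ring_nf
end

section
/- Let f : ℝ → ℝ be nondecreasing with f(0) = 0 and let r = 1 + 1/(p+1) for some p ≥ 1, with |f(s)| ≤ M|s|^{p+1} for |s| ≥ 1 and |f(s)| ≤ f(1)∨|f(−1)| for |s| ≤ 1. Then for any measurable v on a finite measure space (Q, μ): ∫_Q |f(v)|^r dμ ≤ C(M, p, f(1), f(−1))·(μ(Q) + ∫_Q f(v)·v dμ). -/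
open MeasureTheory ENNReal

/-- Splitting-of-integration estimate: for a nondecreasing `f` with `f(0)=0`,
polynomial growth `|f(s)| ≤ M|s|^{p+1}` for `|s| ≥ 1` and bounded on `[−1,1]`,
and `r = 1 + 1/(p+1)`, on a finite measure space
`∫ |f(v)|^r ≤ C·(μ(Q) + ∫ f(v)·v)`. -/
theorem stmt_17 {Q : Type*} [MeasurableSpace Q] (μ : Measure Q)
    [IsFiniteMeasure μ] (f : ℝ → ℝ) (M p r : ℝ)
    (hmono : Monotone f) (hf0 : f 0 = 0) (hM : 0 < M) (hp : 1 ≤ p)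
    (hr : r = 1 + 1 / (p + 1))
    (hgrow : ∀ s : ℝ, 1 ≤ |s| → |f s| ≤ M * |s| ^ (p + 1))
    (hsmall : ∀ s : ℝ, |s| ≤ 1 → |f s| ≤ max (f 1) |f (-1)|)
    (v : Q → ℝ) (hv : Measurable v) :
    ∃ C : ℝ, 0 < C ∧
      ∫⁻ x, ENNReal.ofReal (|f (v x)| ^ r) ∂μ ≤
        ENNReal.ofReal C *
          (μ Set.univ + ∫⁻ x, ENNReal.ofReal (f (v x) * v x) ∂μ) := by
  have hp1 : (0:ℝ) < p + 1 := by linarith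
  have hr1 : r - 1 = 1 / (p + 1) := by rw [hr]; ring
  have hr1pos : 0 < r - 1 := by rw [hr1]; positivity
  have hrpos : 0 < r := by linarith
  set B := max (f 1) |f (-1)| with hB
  have hf1 : 0 ≤ f 1 := by
    have := hmono (show (0:ℝ) ≤ 1 by norm_num); rwa [hf0] at this
  have hBnn : 0 ≤ B := le_trans hf1 (le_max_left _ _)
  set C := B ^ r + M ^ (r - 1) + 1 with hC
  have hMr : 0 < M ^ (r - 1) := Real.rpow_pos_of_pos hM _
  have hBr : 0 ≤ B ^ r := Real.rpow_nonneg hBnn _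
  have hCpos : 0 < C := by positivity
  have hnn : ∀ s : ℝ, 0 ≤ f s * s := by
    intro s
    rcases le_or_gt 0 s with h | h
    · have := hmono h; rw [hf0] at this; exact mul_nonneg this h
    · have := hmono h.le; rw [hf0] at this
      nlinarith [mul_nonneg (neg_nonneg.2 this) (neg_nonneg.2 h.le)]
  have key : ∀ s : ℝ, |f s| ^ r ≤ C * (1 + f s * s) := by
    intro s
    have h1s : 0 ≤ 1 + f s * s := by linarith [hnn s]
    rcases le_or_gt (|s|) 1 with h | h
    · have hb : |f s| ≤ B := hsmall s h
      calc |f s| ^ r ≤ B ^ r := Real.rpow_le_rpow (abs_nonneg _) hb hrpos.le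
        _ ≤ C * 1 := by nlinarith
        _ ≤ C * (1 + f s * s) := by nlinarith [hnn s]
    · have hg := hgrow s h.le
      rcases eq_or_lt_of_le (abs_nonneg (f s)) with h0 | h0
      · rw [← h0, Real.zero_rpow hrpos.ne']; positivity
      · have e1 := Real.rpow_add h0 1 (r - 1)
        rw [show (1:ℝ) + (r - 1) = r by ring, Real.rpow_one] at e1
        have h2 : |f s| ^ (r - 1) ≤ (M * |s| ^ (p + 1)) ^ (r - 1) :=
          Real.rpow_le_rpow (abs_nonneg _) hg hr1pos.le
        have h3 : (M * |s| ^ (p + 1)) ^ (r - 1) = M ^ (r - 1) * |s| := by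
          rw [Real.mul_rpow hM.le (Real.rpow_nonneg (abs_nonneg s) _),
            ← Real.rpow_mul (abs_nonneg s),
            show (p + 1) * (r - 1) = 1 by rw [hr1]; field_simp,
            Real.rpow_one]
        have h4 : |f s| ^ r ≤ |f s| * (M ^ (r - 1) * |s|) := by
          rw [e1]
          exact mul_le_mul_of_nonneg_left (h3 ▸ h2) (abs_nonneg _)
        have h5 : |f s| * |s| = f s * s := by
          rw [← abs_mul, abs_of_nonneg (hnn s)]
        calc |f s| ^ r ≤ M ^ (r - 1) * (f s * s) := by
              rw [← h5]; nlinarith [h4]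
          _ ≤ C * (1 + f s * s) := by nlinarith [hnn s]
  refine ⟨C, hCpos, ?_⟩
  have hmeas : Measurable fun x => ENNReal.ofReal (f (v x) * v x) :=
    ENNReal.measurable_ofReal.comp ((hmono.measurable.comp hv).mul hv)
  calc ∫⁻ x, ENNReal.ofReal (|f (v x)| ^ r) ∂μ
      ≤ ∫⁻ x, ENNReal.ofReal C * (1 + ENNReal.ofReal (f (v x) * v x)) ∂μ := by
        apply lintegral_mono
        intro x
        have he : ENNReal.ofReal C * (1 + ENNReal.ofReal (f (v x) * v x))
            = ENNReal.ofReal (C * (1 + f (v x) * v x)) := by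
          rw [ENNReal.ofReal_mul hCpos.le,
            ENNReal.ofReal_add zero_le_one (hnn _), ENNReal.ofReal_one]
        simp only []
        rw [he]
        exact ENNReal.ofReal_le_ofReal (key _)
    _ = ENNReal.ofReal C * ∫⁻ x, (1 + ENNReal.ofReal (f (v x) * v x)) ∂μ :=
        lintegral_const_mul' _ _ ENNReal.ofReal_ne_top
    _ = ENNReal.ofReal C *
          (μ Set.univ + ∫⁻ x, ENNReal.ofReal (f (v x) * v x) ∂μ) := by
        rw [lintegral_add_left measurable_const, lintegral_const, one_mul]
end
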